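/- Let M be a loopless matroid of rank r on a finite ground set E. For a linear order σ on E, let bc_σ(M) be the σ-broken circuit complex of M, let f_i(bc_σ(M)) be the number of its i-element faces, and let h_{bc_σ(M)}(q) = Σ_{i=0}^{r} f_i(bc_σ(M)) q^i (1−q)^{r−i}. Then for any two linear orders σ and τ on E, h_{bc_σ(M)}(q) = h_{bc_τ(M)}(q); that is, although the broken circuit complex depends on the chosen order, its h-polynomial does not. -/

import Mathlib

open scoped BigOperators

noncomputable section

open Polynomial

/-- A circuit of a matroid `M`: a minimal dependent subset of the ground set. -/
def MatCircuit {α : Type*} (M : Matroid α) (C : Set α) : Prop :=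
  M.Dep C ∧ ∀ D ⊂ C, ¬ M.Dep D

/-- `T` is a face of the `σ`-broken circuit complex of `M`: a subset of the ground set
containing no `σ`-broken circuit (a circuit minus its `σ`-smallest element). -/
def BCFace {α : Type*} (M : Matroid α) (σ : LinearOrder α) (T : Set α) : Prop :=
  T ⊆ M.E ∧
    ¬ ∃ (C : Set α) (i : α), MatCircuit M C ∧ i ∈ C ∧ (∀ j ∈ C, σ.le i j) ∧ C \ {i} ⊆ T

/-- The number of `i`-element faces of the `σ`-broken circuit complex of `M`. -/
def bcFaceCount {α : Type*} (M : Matroid α) (σ : LinearOrder α) (i : ℕ) : ℕ :=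
  {T : Set α | BCFace M σ T ∧ T.ncard = i}.ncard

/-- The `h`-polynomial `Σ_{i=0}^{r} f_i q^i (1-q)^{r-i}` of the `σ`-broken circuit
complex of `M`, formed with respect to the rank `r`. -/
def bcHPoly {α : Type*} (M : Matroid α) (σ : LinearOrder α) (r : ℕ) : Polynomial ℤ :=
  ∑ i ∈ Finset.range (r + 1),
    Polynomial.C (bcFaceCount M σ i : ℤ) * Polynomial.X ^ i
      * (1 - Polynomial.X) ^ (r - i)

/-!
Call `e` a witness for `S` if `e` is the least element of a circuit `C` with `C \ {e} ⊆ S`; the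
faces of the broken circuit complex are the subsets of the ground set without witnesses.
Toggling the least witness of a non-face preserves its closure and (by strong circuit
elimination) its least witness, so it is a sign-reversing involution on the non-faces. Hence for
every flat `F` the alternating sum `∑_{cl S = F} (-1)^|S|` equals the signed number of faces
spanning `F`. Faces are independent, so all of these have `rk F` elements; thus the number of
faces spanning `F`, and with it every `f_i`, does not depend on the order.
-/
open Set
open scoped symmDiff

section Toggle

variable {α : Type*} {S : Set α} {e : α}

lemma symmDiff_singleton_of_mem (he : e ∈ S) : S ∆ {e} = S \ {e} := by
  ext x
  by_cases hx : x = e <;> simp [mem_symmDiff, hx, he]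

lemma symmDiff_singleton_of_notMem (he : e ∉ S) : S ∆ {e} = insert e S := by
  ext x
  by_cases hx : x = e <;> simp [mem_symmDiff, hx, he]

lemma neg_one_pow_ncard_symmDiff_singleton (hS : S.Finite) :
    (-1 : ℤ) ^ (S ∆ {e}).ncard = -(-1) ^ S.ncard := by
  by_cases he : e ∈ S
  · rw [symmDiff_singleton_of_mem he, ← ncard_sdiff_singleton_add_one he hS, pow_succ]
    ring
  · rw [symmDiff_singleton_of_notMem he, ncard_insert_of_notMem he hS, pow_succ]
    ring

theorem sum_neg_one_pow_ncard_eq_zero_of_toggle {s : Finset (Set α)} (hfin : ∀ S ∈ s, S.Finite)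
    {R : Set α → α → Prop} (hex : ∀ S ∈ s, ∃ e, R S e)
    (huniq : ∀ S e e', R S e → R S e' → e = e')
    (hR : ∀ S ∈ s, ∀ e, R S e → S ∆ {e} ∈ s ∧ R (S ∆ {e}) e) :
    ∑ S ∈ s, (-1 : ℤ) ^ S.ncard = 0 := by
  choose w hw using hex
  refine Finset.sum_involution (fun S hS ↦ S ∆ {w S hS}) (fun S hS ↦ ?_) (fun S hS _ ↦ ?_)
    (fun S hS ↦ (hR S hS _ (hw S hS)).1) (fun S hS ↦ ?_)
  · rw [neg_one_pow_ncard_symmDiff_singleton (hfin S hS), add_neg_cancel]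
  · simp [symmDiff_eq_left]
  · rw [huniq _ _ _ (hw _ _) (hR S hS _ (hw S hS)).2, symmDiff_symmDiff_cancel_right]

end Toggle

section BrokenCircuits

variable {α : Type*} {M : Matroid α} {C S T : Set α} {e : α}

lemma matCircuit_iff_isCircuit : MatCircuit M C ↔ M.IsCircuit C := by
  rw [Matroid.isCircuit_iff_forall_ssubset, MatCircuit]
  refine and_congr_right fun hC ↦ forall₂_congr fun D hDC ↦ ?_
  rw [Matroid.not_dep_iff (hDC.subset.trans hC.subset_ground)]

lemma closure_symmDiff_singleton (he : e ∈ M.closure (S \ {e})) :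
    M.closure (S ∆ {e}) = M.closure S := by
  by_cases heS : e ∈ S
  · rw [symmDiff_singleton_of_mem heS, Matroid.closure_sdiff_singleton_eq_closure he]
  · rw [symmDiff_singleton_of_notMem heS, Matroid.closure_insert_eq_of_mem_closure
      (M.closure_subset_closure sdiff_subset he)]

variable [LinearOrder α]

def bcWitnesses (M : Matroid α) (S : Set α) : Set α :=
  {e | ∃ C, M.IsCircuit C ∧ IsLeast C e ∧ C \ {e} ⊆ S}

lemma bcFace_iff : BCFace M ‹LinearOrder α› T ↔ T ⊆ M.E ∧ bcWitnesses M T = ∅ := by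
  refine and_congr_right fun _ ↦ ?_
  simp only [eq_empty_iff_forall_notMem, bcWitnesses, matCircuit_iff_isCircuit, IsLeast,
    lowerBounds]
  aesop

lemma bcWitnesses_mono (hST : S ⊆ T) : bcWitnesses M S ⊆ bcWitnesses M T :=
  fun _ ⟨C, hC, he, hCS⟩ ↦ ⟨C, hC, he, hCS.trans hST⟩

lemma bcWitnesses_subset_ground : bcWitnesses M S ⊆ M.E :=
  fun _ ⟨_, hC, he, _⟩ ↦ hC.subset_ground he.1

lemma mem_closure_of_mem_bcWitnesses (he : e ∈ bcWitnesses M S) : e ∈ M.closure (S \ {e}) := by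
  obtain ⟨C, hC, heC, hCS⟩ := he
  exact M.closure_subset_closure (subset_sdiff_singleton hCS (by simp))
    (hC.mem_closure_sdiff_singleton_of_mem heC.1)

lemma IsLeast.bcWitnesses_sdiff_singleton (h : IsLeast (bcWitnesses M S) e) :
    IsLeast (bcWitnesses M (S \ {e})) e := by
  obtain ⟨⟨C, hC, heC, hCS⟩, hmin⟩ := h
  exact ⟨⟨C, hC, heC, subset_sdiff_singleton hCS (by simp)⟩,
    fun b hb ↦ hmin (bcWitnesses_mono sdiff_subset hb)⟩

/-- If `b < e` witnessed `insert e S` through a circuit `C'`, then `e ∈ C'`, and strong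
elimination of `e` between `C'` and the circuit witnessing `e` yields a circuit witnessing `b`
for `S` itself. -/
lemma IsLeast.bcWitnesses_insert (h : IsLeast (bcWitnesses M S) e) :
    IsLeast (bcWitnesses M (insert e S)) e := by
  obtain ⟨⟨C, hC, heC, hCS⟩, hmin⟩ := h
  refine ⟨bcWitnesses_mono (subset_insert e S) ⟨C, hC, heC, hCS⟩, ?_⟩
  rintro b ⟨C', hC', hbC', hC'S⟩
  by_contra! hbe
  have heC' : e ∈ C' := by
    by_contra heC'
    refine (hmin ⟨C', hC', hbC', fun a ha ↦ ?_⟩).not_gt hbe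
    exact (hC'S ha).resolve_left (ne_of_mem_of_not_mem ha.1 heC')
  have hbC : b ∉ C := fun hb ↦ (heC.2 hb).not_gt hbe
  obtain ⟨D, hDsub, hD, hbD⟩ := hC'.strong_elimination hC heC' heC.1 hbC'.1 hbC
  refine (hmin ⟨D, hD, ⟨hbD, fun a ha ↦ ?_⟩, fun a ha ↦ ?_⟩).not_gt hbe
  · rcases (hDsub ha).1 with haC' | haC
    · exact hbC'.2 haC'
    · exact hbe.le.trans (heC.2 haC)
  · obtain ⟨haD, hab⟩ := ha
    obtain ⟨haC' | haC, hae⟩ := hDsub haD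
    · exact (hC'S ⟨haC', hab⟩).resolve_left hae
    · exact hCS ⟨haC, hae⟩

lemma IsLeast.bcWitnesses_symmDiff_singleton (h : IsLeast (bcWitnesses M S) e) :
    IsLeast (bcWitnesses M (S ∆ {e})) e := by
  by_cases he : e ∈ S
  · rw [symmDiff_singleton_of_mem he]
    exact h.bcWitnesses_sdiff_singleton
  · rw [symmDiff_singleton_of_notMem he]
    exact h.bcWitnesses_insert

lemma indep_of_bcFace [M.Finitary] (hT : BCFace M ‹LinearOrder α› T) : M.Indep T := by
  rw [bcFace_iff] at hT
  by_contra hdep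
  obtain ⟨C, hCT, hC⟩ := ((M.not_indep_iff hT.1).1 hdep).exists_isCircuit_subset
  obtain ⟨e, heC, hmin⟩ := exists_min_image C id hC.finite hC.nonempty
  exact (eq_empty_iff_forall_notMem.1 hT.2) e ⟨C, hC, ⟨heC, hmin⟩, sdiff_subset.trans hCT⟩

end BrokenCircuits

section ClosureFibers

open Classical

variable {α : Type*} (M : Matroid α) [M.Finite]

def closureFiber (F : Set α) : Finset (Set α) :=
  M.ground_finite.powerset.toFinset.filter (M.closure · = F)

variable {M} {F S : Set α}

lemma mem_closureFiber : S ∈ closureFiber M F ↔ S ⊆ M.E ∧ M.closure S = F := by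
  simp [closureFiber]

variable [LinearOrder α]

lemma sum_closureFiber_filter_not_bcFace :
    ∑ S ∈ (closureFiber M F).filter (¬ BCFace M ‹LinearOrder α› ·),
      (-1 : ℤ) ^ S.ncard = 0 := by
  refine sum_neg_one_pow_ncard_eq_zero_of_toggle (R := fun S e ↦ IsLeast (bcWitnesses M S) e)
    (fun S hS ↦ ?_) (fun S hS ↦ ?_) (fun _ _ _ ↦ IsLeast.unique) (fun S hS e he ↦ ?_)
  all_goals simp only [Finset.mem_filter, mem_closureFiber, bcFace_iff, not_and] at hS
  · exact M.ground_finite.subset hS.1.1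
  · obtain ⟨⟨hSE, -⟩, hS⟩ := hS
    exact exists_min_image _ id (M.ground_finite.subset bcWitnesses_subset_ground)
      (nonempty_iff_ne_empty.2 (hS hSE))
  · obtain ⟨⟨hSE, rfl⟩, -⟩ := hS
    have heE : e ∈ M.E := bcWitnesses_subset_ground he.1
    refine ⟨?_, he.bcWitnesses_symmDiff_singleton⟩
    simp only [Finset.mem_filter, mem_closureFiber, bcFace_iff, not_and]
    exact ⟨⟨symmDiff_subset_union.trans (union_subset hSE (singleton_subset_iff.2 heE)),
      closure_symmDiff_singleton (mem_closure_of_mem_bcWitnesses he.1)⟩,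
      fun _ ↦ he.bcWitnesses_symmDiff_singleton.nonempty.ne_empty⟩

lemma ncard_eq_of_bcFace_mem_closureFiber (hS : S ∈ closureFiber M F)
    (hface : BCFace M ‹LinearOrder α› S) : S.ncard = (M.eRk F).toNat := by
  rw [← (mem_closureFiber.1 hS).2, Matroid.eRk_closure_eq,
    (indep_of_bcFace hface).eRk_eq_encard, ncard_def]

lemma card_filter_bcFace_closureFiber_mul :
    (((closureFiber M F).filter (BCFace M ‹LinearOrder α› ·)).card : ℤ) *
        (-1) ^ (M.eRk F).toNat =
      ∑ S ∈ closureFiber M F, (-1 : ℤ) ^ S.ncard := by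
  rw [← Finset.sum_filter_add_sum_filter_not _ (BCFace M ‹LinearOrder α› ·),
    sum_closureFiber_filter_not_bcFace, add_zero, Finset.sum_congr rfl fun S hS ↦ by
      obtain ⟨hSF, hface⟩ := Finset.mem_filter.1 hS
      rw [ncard_eq_of_bcFace_mem_closureFiber hSF hface],
    Finset.sum_const, nsmul_eq_mul]

end ClosureFibers

section FaceCounts

open Classical

variable {α : Type*} {M : Matroid α} [M.Finite] {F : Set α}

lemma filter_bcFace_ncard_closureFiber [LinearOrder α] (i : ℕ) :
    (closureFiber M F).filter (fun S ↦ BCFace M ‹LinearOrder α› S ∧ S.ncard = i) =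
      if (M.eRk F).toNat = i then (closureFiber M F).filter (BCFace M ‹LinearOrder α› ·)
      else ∅ := by
  ext S
  split_ifs with hi
  · simp only [Finset.mem_filter]
    exact and_congr_right fun hS ↦ and_iff_left_of_imp fun hface ↦
      hi ▸ ncard_eq_of_bcFace_mem_closureFiber hS hface
  · simp only [Finset.mem_filter, Finset.notMem_empty, iff_false, not_and]
    exact fun hS hface hSi ↦ hi (hSi ▸ ncard_eq_of_bcFace_mem_closureFiber hS hface).symm

lemma card_filter_bcFace_closureFiber_eq (σ τ : LinearOrder α) :
    ((closureFiber M F).filter (BCFace M σ ·)).card =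
      ((closureFiber M F).filter (BCFace M τ ·)).card := by
  have hσ := @card_filter_bcFace_closureFiber_mul _ M _ F σ
  have hτ := @card_filter_bcFace_closureFiber_mul _ M _ F τ
  exact_mod_cast
    mul_right_cancel₀ (pow_ne_zero _ (neg_ne_zero.2 one_ne_zero)) (hσ.trans hτ.symm)

lemma card_filter_bcFace_ncard_closureFiber_eq (σ τ : LinearOrder α) (i : ℕ) :
    ((closureFiber M F).filter (fun S ↦ BCFace M σ S ∧ S.ncard = i)).card =
      ((closureFiber M F).filter (fun S ↦ BCFace M τ S ∧ S.ncard = i)).card := by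
  rw [@filter_bcFace_ncard_closureFiber _ M _ F σ, @filter_bcFace_ncard_closureFiber _ M _ F τ]
  split_ifs
  · exact card_filter_bcFace_closureFiber_eq σ τ
  · rfl

lemma bcFaceCount_eq_sum_closureFiber (σ : LinearOrder α) (i : ℕ) :
    bcFaceCount M σ i = ∑ F ∈ M.ground_finite.powerset.toFinset.image M.closure,
      ((closureFiber M F).filter (fun S ↦ BCFace M σ S ∧ S.ncard = i)).card := by
  have hfaces : {T | BCFace M σ T ∧ T.ncard = i} =
      ↑(M.ground_finite.powerset.toFinset.filter (fun S ↦ BCFace M σ S ∧ S.ncard = i)) := by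
    ext T
    simpa using fun hT _ ↦ hT.1
  rw [bcFaceCount, hfaces, ncard_coe_finset,
    Finset.card_eq_sum_card_fiberwise (f := M.closure)
      fun S hS ↦ Finset.mem_image_of_mem _ (Finset.mem_filter.1 hS).1]
  simp only [closureFiber, Finset.filter_filter, and_comm]

lemma bcFaceCount_eq_bcFaceCount (σ τ : LinearOrder α) (i : ℕ) :
    bcFaceCount M σ i = bcFaceCount M τ i := by
  simp only [bcFaceCount_eq_sum_closureFiber, card_filter_bcFace_ncard_closureFiber_eq σ τ]

end FaceCounts

theorem stmt4_general {α : Type*} (M : Matroid α) (hE : M.E.Finite)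
    (r : ℕ)
    (σ τ : LinearOrder α) :
    bcHPoly M σ r = bcHPoly M τ r := by
  have : M.Finite := ⟨hE⟩
  simp only [bcHPoly, bcFaceCount_eq_bcFaceCount σ τ]

/-- For a loopless matroid `M` of rank `r` on a finite ground set, the `h`-polynomial of
the `σ`-broken circuit complex does not depend on the linear order `σ`. -/
theorem stmt4 {α : Type*} (M : Matroid α) (hE : M.E.Finite)
    (hloopless : ∀ e : α, ¬ MatCircuit M {e})
    (r : ℕ) (hrank : ∃ B : Set α, M.IsBase B ∧ B.ncard = r)
    (σ τ : LinearOrder α) :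
    bcHPoly M σ r = bcHPoly M τ r :=
  stmt4_general M hE r σ τ
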